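/- arXiv:math/0408162 — 5 statements merged into one kernel-verified Lean document; each statement's English description precedes it below -/
import Mathlib

section
/- Let R be a commutative Noetherian ring, let 0 → X → Y → Z → 0 be a short exact sequence of finitely generated R-modules, and let W be any finitely generated R-module. Then the induced sequence of stable Hom modules Hom̲_R(W,X) → Hom̲_R(W,Y) → Hom̲_R(W,Z) is exact (the image of the first induced map equals the kernel of the second). -/
universe u

noncomputable section

variable (R : Type u) [CommRing R]

/-- A linear map `f : X → Y` factors through some finitely generated projective `R`-module.
The set of such maps is exactly the submodule `P(X,Y) ⊆ Hom_R(X,Y)` of homomorphisms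
factoring through projectives, so `f ∈ P(X,Y)` iff `FactorsThroughProjective R f`. -/
def FactorsThroughProjective {X Y : Type u} [AddCommGroup X] [Module R X]
    [AddCommGroup Y] [Module R Y] (f : X →ₗ[R] Y) : Prop :=
  ∃ Q : ModuleCat.{u} R, Module.Projective R Q ∧ Module.Finite R Q ∧
    ∃ (g : X →ₗ[R] Q) (h : Q →ₗ[R] Y), h.comp g = f

variable {R}

theorem Function.Exact.exists_comp_eq_of_comp_eq_zero {W X Y Z : Type*}
    [AddCommGroup W] [Module R W] [AddCommGroup X] [Module R X]
    [AddCommGroup Y] [Module R Y] [AddCommGroup Z] [Module R Z]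
    {f : X →ₗ[R] Y} {g : Y →ₗ[R] Z} (hfg : Function.Exact f g) (hf : Function.Injective f)
    {w : W →ₗ[R] Y} (hw : g ∘ₗ w = 0) : ∃ u : W →ₗ[R] X, f ∘ₗ u = w :=
  ⟨LinearMap.codRestrictOfInjective w f hf fun x => (hfg (w x)).mp (LinearMap.congr_fun hw x),
    LinearMap.codRestrictOfInjective_comp _ _ _ _⟩

namespace FactorsThroughProjective

variable {W Y Z : Type u} [AddCommGroup W] [Module R W] [AddCommGroup Y] [Module R Y]
  [AddCommGroup Z] [Module R Z]

theorem comp_left {φ : W →ₗ[R] Y} (hφ : FactorsThroughProjective R φ) (ψ : Y →ₗ[R] Z) :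
    FactorsThroughProjective R (ψ ∘ₗ φ) := by
  obtain ⟨Q, hQ, hQfin, a, b, rfl⟩ := hφ
  exact ⟨Q, hQ, hQfin, a, ψ ∘ₗ b, rfl⟩

theorem exists_lift_of_surjective {g : Y →ₗ[R] Z} (hg : Function.Surjective g)
    {φ : W →ₗ[R] Z} (hφ : FactorsThroughProjective R φ) :
    ∃ ψ : W →ₗ[R] Y, FactorsThroughProjective R ψ ∧ g ∘ₗ ψ = φ := by
  obtain ⟨Q, hQ, hQfin, a, b, rfl⟩ := hφ
  obtain ⟨b', hb'⟩ := Module.projective_lifting_property g b hg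
  exact ⟨b' ∘ₗ a, ⟨Q, hQ, hQfin, a, b', rfl⟩, by rw [← LinearMap.comp_assoc, hb']⟩

end FactorsThroughProjective

theorem stableHom_exact_covariant_general
    (X Y Z W : Type u) [AddCommGroup X] [Module R X] [AddCommGroup Y] [Module R Y]
    [AddCommGroup Z] [Module R Z] [AddCommGroup W] [Module R W]
    (f : X →ₗ[R] Y) (g : Y →ₗ[R] Z)
    (hf : Function.Injective f) (hfg : Function.Exact f g) (hg : Function.Surjective g) :
    ∀ v : W →ₗ[R] Y,
      FactorsThroughProjective R (g.comp v) ↔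
        ∃ u : W →ₗ[R] X, FactorsThroughProjective R (v - f.comp u) := by
  intro v
  constructor
  · intro hgv
    obtain ⟨ψ, hψ, hgψ⟩ := hgv.exists_lift_of_surjective hg
    obtain ⟨u, hu⟩ := hfg.exists_comp_eq_of_comp_eq_zero hf (w := v - ψ)
      (by rw [LinearMap.comp_sub, hgψ, sub_self])
    exact ⟨u, by rwa [hu, sub_sub_cancel]⟩
  · rintro ⟨u, hu⟩
    simpa only [LinearMap.comp_sub, ← LinearMap.comp_assoc, hfg.linearMap_comp_eq_zero,
      LinearMap.zero_comp, sub_zero] using hu.comp_left g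

/-- Let `0 → X → Y → Z → 0` be a short exact sequence of finitely generated modules over a
commutative Noetherian ring `R`, and `W` any finitely generated `R`-module.  Then the induced
sequence of stable Hom modules `Hom̲(W,X) → Hom̲(W,Y) → Hom̲(W,Z)` is exact.  Since the maps
on the quotients `Hom̲(W,-) = Hom(W,-)/P(W,-)` are induced by composition, exactness
(image of the first map = kernel of the second) says precisely: for every `v : W → Y`,
the class of `v` is killed by `g∘-` (i.e. `g ∘ v ∈ P(W,Z)`) iff the class of `v` is in the
image of `f∘-` (i.e. `v - f ∘ u ∈ P(W,Y)` for some `u : W → X`). -/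
theorem stableHom_exact_covariant [IsNoetherianRing R]
    (X Y Z W : Type u) [AddCommGroup X] [Module R X] [AddCommGroup Y] [Module R Y]
    [AddCommGroup Z] [Module R Z] [AddCommGroup W] [Module R W]
    [Module.Finite R X] [Module.Finite R Y] [Module.Finite R Z] [Module.Finite R W]
    (f : X →ₗ[R] Y) (g : Y →ₗ[R] Z)
    (hf : Function.Injective f) (hfg : Function.Exact f g) (hg : Function.Surjective g) :
    ∀ v : W →ₗ[R] Y,
      FactorsThroughProjective R (g.comp v) ↔
        ∃ u : W →ₗ[R] X, FactorsThroughProjective R (v - f.comp u) :=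
  stableHom_exact_covariant_general X Y Z W f g hf hfg hg

end
end

section
/- Let R be a commutative Noetherian ring, let 0 → X → Y → Z → 0 be a short exact sequence of finitely generated R-modules with Ext^1_R(Z,R) = 0, and let W be any finitely generated R-module. Then the induced sequence of stable Hom modules Hom̲_R(Z,W) → Hom̲_R(Y,W) → Hom̲_R(X,W) is exact (the image of the first induced map equals the kernel of the second). -/
open CategoryTheory

universe u

noncomputable section

variable (R : Type u) [CommRing R]

/-- The `i`-th Ext module over `R` of two `R`-modules. -/
abbrev ExtMod (i : ℕ) (X Y : ModuleCat.{u} R) : ModuleCat.{u} R :=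
  ((Ext R (ModuleCat.{u} R) i).obj (Opposite.op X)).obj Y

/-!
If `v ∘ f = β ∘ α` with `α : X → Q` and `Q` finitely generated projective, it suffices to
extend `α` along `f` to some `A : Y → Q`: then `v - β ∘ A` vanishes on `f(X) = ker g`, so it
equals `u ∘ g` for some `u`. Such extensions exist because `Ext¹(Z, -)` vanishes on `Q`.
Concretely, for `p : P → Z` the augmentation of a projective resolution, `Ext¹(Z, R) = 0` says
that maps `ker p → R` extend to `P`; hence so do maps into `Rⁿ` and into its retract `Q`, and
since `Y` is the pushout of `P ← ker p → X`, maps `X → Q` extend along `f`.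
-/

section Extension

variable {R}

variable {A B M N : Type*} [AddCommGroup A] [Module R A] [AddCommGroup B] [Module R B]
  [AddCommGroup M] [Module R M] [AddCommGroup N] [Module R N]

def ExtendsAlong (i : A →ₗ[R] B) (M : Type*) [AddCommGroup M] [Module R M] : Prop :=
  ∀ φ : A →ₗ[R] M, ∃ ψ : B →ₗ[R] M, ψ ∘ₗ i = φ

namespace ExtendsAlong

variable {i : A →ₗ[R] B}

lemma pi {ι : Type*} {M : ι → Type*} [∀ j, AddCommGroup (M j)] [∀ j, Module R (M j)]
    (h : ∀ j, ExtendsAlong i (M j)) : ExtendsAlong i (∀ j, M j) := by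
  intro φ
  choose ψ hψ using fun j => h j (LinearMap.proj j ∘ₗ φ)
  exact ⟨LinearMap.pi ψ, LinearMap.ext fun a => funext fun j => LinearMap.congr_fun (hψ j) a⟩

lemma of_retract (s : M →ₗ[R] N) (π : N →ₗ[R] M) (hπs : π ∘ₗ s = LinearMap.id)
    (h : ExtendsAlong i N) : ExtendsAlong i M := by
  intro φ
  obtain ⟨ψ, hψ⟩ := h (s ∘ₗ φ)
  refine ⟨π ∘ₗ ψ, ?_⟩
  rw [LinearMap.comp_assoc, hψ, ← LinearMap.comp_assoc, hπs, LinearMap.id_comp]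

lemma of_projective_of_finite (h : ExtendsAlong i R) (Q : Type*) [AddCommGroup Q] [Module R Q]
    [Module.Projective R Q] [Module.Finite R Q] : ExtendsAlong i Q := by
  obtain ⟨n, π, hπ⟩ := Module.Finite.exists_fin' R Q
  obtain ⟨s, hs⟩ := Module.projective_lifting_property π LinearMap.id hπ
  exact of_retract s π hs (pi fun _ => h)

end ExtendsAlong

lemma LinearMap.exists_comp_eq_of_surjective_of_ker_le {θ : A →ₗ[R] B} (hθ : Function.Surjective θ)
    {γ : A →ₗ[R] M} (h : LinearMap.ker θ ≤ LinearMap.ker γ) : ∃ δ : B →ₗ[R] M, δ ∘ₗ θ = γ :=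
  ⟨(LinearMap.ker θ).liftQ γ h ∘ₗ (θ.quotKerEquivOfSurjective hθ).symm.toLinearMap,
    LinearMap.ext fun a => by simp⟩

lemma LinearMap.exists_comp_eq_of_injective_of_range_le {f : A →ₗ[R] B} (hf : Function.Injective f)
    {γ : M →ₗ[R] B} (h : LinearMap.range γ ≤ LinearMap.range f) : ∃ δ : M →ₗ[R] A, f ∘ₗ δ = γ :=
  ⟨(LinearEquiv.ofInjective f hf).symm.toLinearMap ∘ₗ γ.codRestrict _ fun m => h ⟨m, rfl⟩,
    LinearMap.ext fun m => by simp⟩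

end Extension

section Pushout

variable {R} {X Y Z P Q : Type*} [AddCommGroup X] [Module R X] [AddCommGroup Y] [Module R Y]
  [AddCommGroup Z] [Module R Z] [AddCommGroup P] [Module R P] [Module.Projective R P]
  [AddCommGroup Q] [Module R Q]

lemma Function.Exact.extendsAlong_of_extendsAlong_ker {f : X →ₗ[R] Y} {g : Y →ₗ[R] Z}
    (hf : Function.Injective f) (hfg : Function.Exact f g) (hg : Function.Surjective g)
    {p : P →ₗ[R] Z} (hp : Function.Surjective p) (hQ : ExtendsAlong (LinearMap.ker p).subtype Q) :
    ExtendsAlong f Q := by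
  obtain ⟨h, hgh⟩ := Module.projective_lifting_property g p hg
  have hrange : LinearMap.range (h ∘ₗ (LinearMap.ker p).subtype) ≤ LinearMap.range f := by
    rw [← hfg.linearMap_ker_eq, LinearMap.range_le_ker_iff, ← LinearMap.comp_assoc, hgh]
    exact p.comp_ker_subtype
  obtain ⟨k, hk⟩ := LinearMap.exists_comp_eq_of_injective_of_range_le hf hrange
  intro α
  obtain ⟨E, hE⟩ := hQ (α ∘ₗ k)
  -- `Y` is the pushout of `P ← ker p → X`, so `E` and `α` glue to a map on `Y`.
  have hsurj : Function.Surjective (h.coprod f) := by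
    intro y
    obtain ⟨q, hq⟩ := hp (g y)
    obtain ⟨x, hx⟩ := (hfg (y - h q)).mp (by
      rw [map_sub, ← LinearMap.comp_apply g h, hgh, hq, sub_self])
    exact ⟨(q, x), by simp [hx]⟩
  have hker : LinearMap.ker (h.coprod f) ≤ LinearMap.ker (E.coprod α) := by
    rintro ⟨q, x⟩ hqx
    rw [LinearMap.mem_ker, LinearMap.coprod_apply] at hqx ⊢
    have hq : q ∈ LinearMap.ker p := by
      rw [LinearMap.mem_ker, ← hgh, LinearMap.comp_apply, eq_neg_of_add_eq_zero_left hqx, map_neg,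
        hfg.apply_apply_eq_zero, neg_zero]
    have hx : x = -k ⟨q, hq⟩ := hf (by
      rw [map_neg, ← LinearMap.comp_apply f k, hk]
      exact eq_neg_of_add_eq_zero_right hqx)
    have hEq : E q = α (k ⟨q, hq⟩) := LinearMap.congr_fun hE ⟨q, hq⟩
    rw [hx, map_neg, hEq, add_neg_cancel]
  obtain ⟨A, hA⟩ := LinearMap.exists_comp_eq_of_surjective_of_ker_le hsurj hker
  refine ⟨A, ?_⟩
  rw [← LinearMap.coprod_inr h f, ← LinearMap.comp_assoc, hA, LinearMap.coprod_inr]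

end Pushout

namespace CategoryTheory.ProjectiveResolution

variable {R} {Z M : ModuleCat.{u} R} (P : ProjectiveResolution Z)

lemma exists_d_comp_eq_of_subsingleton_ext_one (hZ : Subsingleton (ExtMod R 1 Z M))
    (c : P.complex.X 1 ⟶ M) (hc : P.complex.d 2 1 ≫ c = 0) :
    ∃ ψ : P.complex.X 0 ⟶ M, P.complex.d 1 0 ≫ ψ = c := by
  have : Subsingleton ((P.complex.linearYonedaObj R M).homology 1) :=
    ((forget (ModuleCat R)).mapIso (P.isoExt 1 M).symm).toEquiv.subsingleton
  have hexact :=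
    (HomologicalComplex.exactAt_iff' (P.complex.linearYonedaObj R M) 0 1 2 (by simp) (by simp)).1
    ((HomologicalComplex.exactAt_iff_isZero_homology _ 1).2 (ModuleCat.isZero_of_subsingleton _))
  exact (ShortComplex.moduleCat_exact_iff _).1 hexact c hc

lemma extendsAlong_ker_π_zero (hZ : Subsingleton (ExtMod R 1 Z M)) :
    ExtendsAlong (LinearMap.ker (P.π.f 0).hom).subtype M := by
  have hrange : LinearMap.range (P.complex.d 1 0).hom = LinearMap.ker (P.π.f 0).hom :=
    (ShortComplex.moduleCat_exact_iff_range_eq_ker _).1 P.exact₀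
  have hd (x : P.complex.X 1) : P.complex.d 1 0 x ∈ LinearMap.ker (P.π.f 0).hom :=
    hrange ▸ ⟨x, rfl⟩
  -- `φ` pulled back along `d₁ : P₁ → im d₁ = ker π₀` is a 1-cocycle, hence a coboundary.
  intro φ
  let c : P.complex.X 1 ⟶ M := ModuleCat.ofHom (φ ∘ₗ (P.complex.d 1 0).hom.codRestrict _ hd)
  have hc : P.complex.d 2 1 ≫ c = 0 := by
    ext x
    have hdd : P.complex.d 1 0 (P.complex.d 2 1 x) = 0 :=
      congrArg (fun d => d.hom x) (P.complex.d_comp_d 2 1 0)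
    exact (congrArg φ (Subtype.ext hdd)).trans φ.map_zero
  obtain ⟨ψ, hψ⟩ := P.exists_d_comp_eq_of_subsingleton_ext_one hZ c hc
  refine ⟨ψ.hom, LinearMap.ext fun ⟨k, hk⟩ => ?_⟩
  obtain ⟨x, rfl⟩ : k ∈ LinearMap.range (P.complex.d 1 0).hom := hrange ▸ hk
  exact congrArg (fun d => d.hom x) hψ

end CategoryTheory.ProjectiveResolution

theorem stableHom_exact_contravariant
    (X Y Z W : ModuleCat.{u} R)
    (f : X →ₗ[R] Y) (g : Y →ₗ[R] Z)
    (hf : Function.Injective f) (hfg : Function.Exact f g) (hg : Function.Surjective g)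
    (hZ : Subsingleton (ExtMod R 1 Z (ModuleCat.of R R))) :
    ∀ v : Y →ₗ[R] W,
      FactorsThroughProjective R (v.comp f) ↔
        ∃ u : Z →ₗ[R] W, FactorsThroughProjective R (v - u.comp g) := by
  intro v
  constructor
  · rintro ⟨Q, hQp, hQf, α, β, hβα⟩
    let P := ProjectiveResolution.of Z
    have : Module.Projective R (P.complex.X 0) :=
      (IsProjective.iff_projective _).2 (P.projective 0)
    have hR : ExtendsAlong (LinearMap.ker (P.π.f 0).hom).subtype R := P.extendsAlong_ker_π_zero hZ
    obtain ⟨A, hA⟩ := hfg.extendsAlong_of_extendsAlong_ker hf hg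
      ((ModuleCat.epi_iff_surjective (P.π.f 0)).1 inferInstance) (hR.of_projective_of_finite Q) α
    have hker : LinearMap.ker g ≤ LinearMap.ker (v - β ∘ₗ A) := by
      rw [hfg.linearMap_ker_eq, LinearMap.range_le_ker_iff, LinearMap.sub_comp,
        LinearMap.comp_assoc, hA, hβα, sub_self]
    obtain ⟨u, hu⟩ := LinearMap.exists_comp_eq_of_surjective_of_ker_le hg hker
    exact ⟨u, Q, hQp, hQf, A, β, by rw [hu, sub_sub_cancel]⟩
  · rintro ⟨u, Q, hQp, hQf, a, b, hba⟩
    refine ⟨Q, hQp, hQf, a ∘ₗ f, b, ?_⟩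
    rw [← LinearMap.comp_assoc, hba, LinearMap.sub_comp, LinearMap.comp_assoc,
      hfg.linearMap_comp_eq_zero, LinearMap.comp_zero, sub_zero]

end
end

section
/- Let R be a commutative Noetherian ring and let C be a subcategory of finitely generated R-modules that is extension-closed and closed under syzygies. Then C is closed under kernels of epimorphisms, i.e. C is a resolving subcategory. -/
/-!
Given `0 → X → Y → Z → 0` with `Y, Z ∈ C`, choose a surjection `p : Rⁿ → Z`; its kernel `Ω`
lies in `C` since `C` is closed under syzygies. The pullback `E = Y ×_Z Rⁿ` sits in two short
exact sequences, `0 → Ω → E → Y → 0` and `0 → X → E → Rⁿ → 0`. The first puts `E` in `C` by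
extension-closedness; the second splits because `Rⁿ` is projective, so `X` is a direct summand
of `E` and lies in `C`.
-/

universe u

noncomputable section

variable (R : Type u) [CommRing R]

/-- A subcategory of the category of finitely generated `R`-modules: a class of finitely
generated `R`-modules closed under isomorphism, finite direct sums and direct summands,
and containing all finitely generated projective `R`-modules. -/
structure Subcat (R : Type u) [CommRing R] where
  mem : ModuleCat.{u} R → Prop
  finite_of_mem : ∀ X : ModuleCat.{u} R, mem X → Module.Finite R X
  mem_of_iso : ∀ X Y : ModuleCat.{u} R, (X ≃ₗ[R] Y) → mem X → mem Y
  mem_prod : ∀ X Y : ModuleCat.{u} R, mem X → mem Y → mem (ModuleCat.of R (X × Y))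
  mem_of_prod_left : ∀ X Y : ModuleCat.{u} R, mem (ModuleCat.of R (X × Y)) → mem X
  mem_of_projective : ∀ P : ModuleCat.{u} R,
    Module.Projective R P → Module.Finite R P → mem P

/-- `C` is extension-closed: for every short exact sequence `0 → X → Y → Z → 0` of finitely
generated `R`-modules with `X, Z ∈ C` one has `Y ∈ C`. -/
def ExtensionClosed (C : Subcat R) : Prop :=
  ∀ X Y Z : ModuleCat.{u} R, Module.Finite R Y →
    ∀ (f : X →ₗ[R] Y) (g : Y →ₗ[R] Z),
      Function.Injective f → Function.Exact f g → Function.Surjective g →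
      C.mem X → C.mem Z → C.mem Y

/-- `C` is closed under syzygies: for every short exact sequence `0 → X → P → Z → 0` of
finitely generated `R`-modules with `P` projective and `Z ∈ C` one has `X ∈ C`. -/
def SyzygyClosed (C : Subcat R) : Prop :=
  ∀ X P Z : ModuleCat.{u} R, Module.Finite R X →
    Module.Projective R P → Module.Finite R P →
    ∀ (f : X →ₗ[R] P) (g : P →ₗ[R] Z),
      Function.Injective f → Function.Exact f g → Function.Surjective g →
      C.mem Z → C.mem X

/-- `C` is closed under kernels of epimorphisms: for every short exact sequence
`0 → X → Y → Z → 0` of finitely generated `R`-modules with `Y, Z ∈ C` one has `X ∈ C`. -/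
def KernelClosed (C : Subcat R) : Prop :=
  ∀ X Y Z : ModuleCat.{u} R, Module.Finite R X →
    ∀ (f : X →ₗ[R] Y) (g : Y →ₗ[R] Z),
      Function.Injective f → Function.Exact f g → Function.Surjective g →
      C.mem Y → C.mem Z → C.mem X

open LinearMap

namespace LinearMap

variable {R} {X Y Z K P : Type*}
  [AddCommGroup X] [AddCommGroup Y] [AddCommGroup Z] [AddCommGroup K] [AddCommGroup P]
  [Module R X] [Module R Y] [Module R Z] [Module R K] [Module R P]
  (g : Y →ₗ[R] Z) (p : P →ₗ[R] Z)

abbrev pullback : Submodule R (Y × P) :=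
  eqLocus (g ∘ₗ fst R Y P) (p ∘ₗ snd R Y P)

theorem mem_pullback {x : Y × P} : x ∈ pullback g p ↔ g x.1 = p x.2 :=
  mem_eqLocus

def pullbackFst : pullback g p →ₗ[R] Y := fst R Y P ∘ₗ (pullback g p).subtype

def pullbackSnd : pullback g p →ₗ[R] P := snd R Y P ∘ₗ (pullback g p).subtype

variable {g p}

theorem pullbackFst_surjective (hp : Function.Surjective p) :
    Function.Surjective (pullbackFst g p) := fun y ↦
  let ⟨q, hq⟩ := hp (g y)
  ⟨⟨(y, q), (mem_pullback g p).mpr hq.symm⟩, rfl⟩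

theorem pullbackSnd_surjective (hg : Function.Surjective g) :
    Function.Surjective (pullbackSnd g p) := fun q ↦
  let ⟨y, hy⟩ := hg (p q)
  ⟨⟨(y, q), (mem_pullback g p).mpr hy⟩, rfl⟩

theorem exists_injective_exact_pullbackFst {k : K →ₗ[R] P} (hk : Function.Injective k)
    (hkp : Function.Exact k p) :
    ∃ i : K →ₗ[R] pullback g p, Function.Injective i ∧ Function.Exact i (pullbackFst g p) := by
  refine ⟨codRestrict _ (inr R Y P ∘ₗ k) fun x ↦ (mem_pullback g p).mpr ?_, ?_, ?_⟩
  · simp [hkp.apply_apply_eq_zero x]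
  · intro a b hab
    exact hk congr(($hab).1.2)
  · rintro ⟨⟨y, q⟩, hyq⟩
    rw [mem_pullback] at hyq
    constructor
    · rintro (rfl : y = 0)
      obtain ⟨x, rfl⟩ := (hkp q).mp (by simpa using hyq.symm)
      exact ⟨x, rfl⟩
    · rintro ⟨x, hx⟩
      exact congr(($hx).1.1).symm

theorem exists_injective_exact_pullbackSnd {f : X →ₗ[R] Y} (hf : Function.Injective f)
    (hfg : Function.Exact f g) :
    ∃ j : X →ₗ[R] pullback g p, Function.Injective j ∧ Function.Exact j (pullbackSnd g p) := by
  refine ⟨codRestrict _ (inl R Y P ∘ₗ f) fun x ↦ (mem_pullback g p).mpr ?_, ?_, ?_⟩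
  · simp [hfg.apply_apply_eq_zero x]
  · intro a b hab
    exact hf congr(($hab).1.1)
  · rintro ⟨⟨y, q⟩, hyq⟩
    rw [mem_pullback] at hyq
    constructor
    · rintro (rfl : q = 0)
      obtain ⟨x, rfl⟩ := (hfg y).mp (by simpa using hyq)
      exact ⟨x, rfl⟩
    · rintro ⟨x, hx⟩
      exact congr(($hx).1.2).symm

end LinearMap

theorem Function.Exact.nonempty_linearEquiv_prod_of_projective {R M N P : Type*} [Ring R]
    [AddCommGroup M] [AddCommGroup N] [AddCommGroup P] [Module R M] [Module R N] [Module R P]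
    [Module.Projective R P] {f : M →ₗ[R] N} {g : N →ₗ[R] P} (hfg : Function.Exact f g)
    (hf : Function.Injective f) (hg : Function.Surjective g) : Nonempty (N ≃ₗ[R] M × P) :=
  let ⟨s, hs⟩ := Module.projective_lifting_property g LinearMap.id hg
  ⟨(hfg.splitSurjectiveEquiv hf ⟨s, hs⟩).1⟩

namespace Subcat

variable {R} (C : Subcat R)

theorem mem_of_exact_of_projective {X E P : ModuleCat.{u} R} [Module.Projective R P]
    {f : X →ₗ[R] E} {g : E →ₗ[R] P} (hf : Function.Injective f) (hfg : Function.Exact f g)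
    (hg : Function.Surjective g) (hE : C.mem E) : C.mem X :=
  have ⟨e⟩ := hfg.nonempty_linearEquiv_prod_of_projective hf hg
  C.mem_of_prod_left X P (C.mem_of_iso E _ e hE)

end Subcat

/-- Over a commutative Noetherian ring, a subcategory of finitely generated modules that is
extension-closed and closed under syzygies is closed under kernels of epimorphisms
(i.e. it is a resolving subcategory). -/
theorem kernelClosed_of_extensionClosed_of_syzygyClosed [IsNoetherianRing R]
    (C : Subcat R) (hext : ExtensionClosed R C) (hsyz : SyzygyClosed R C) :
    KernelClosed R C := by
  intro X Y Z _ f g hf hfg hg hY hZ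
  have := C.finite_of_mem Y hY
  have := C.finite_of_mem Z hZ
  obtain ⟨n, p, hp⟩ := Module.Finite.exists_fin' R Z
  have hΩ : C.mem (ModuleCat.of R (ker p)) :=
    hsyz _ (ModuleCat.of R (Fin n → R)) Z inferInstance inferInstance inferInstance _ p
      (ker p).injective_subtype (exact_subtype_ker_map p) hp hZ
  obtain ⟨i, hi, hiE⟩ := exists_injective_exact_pullbackFst (g := g) (ker p).injective_subtype
    (exact_subtype_ker_map p)
  have hE : C.mem (ModuleCat.of R (pullback g p)) :=
    hext _ _ Y inferInstance i _ hi hiE (pullbackFst_surjective hp) hΩ hY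
  obtain ⟨j, hj, hjE⟩ := exists_injective_exact_pullbackSnd (p := p) hf hfg
  have : Module.Projective R (ModuleCat.of R (Fin n → R)) :=
    inferInstanceAs (Module.Projective R (Fin n → R))
  exact C.mem_of_exact_of_projective (P := ModuleCat.of R (Fin n → R)) hj hjE
    (pullbackSnd_surjective hg) hE

end
end

section
/- Let R be a commutative Noetherian ring, let 0 → A → B → C → 0 be a short exact sequence of finitely generated R-modules with Ext^1_R(C,R) = 0, and let 0 → A → P → Y → 0 be a short exact sequence with P a finitely generated projective R-module. Then there exists a short exact sequence 0 → B → C ⊕ P → Y → 0 of R-modules. -/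
open CategoryTheory

universe u

noncomputable section

variable (R : Type u) [CommRing R]

/-!
The pushout `E` of `B ← A → P` sits in short exact sequences `0 → P → E → C → 0` and
`0 → B → E → Y → 0`. As `P` is a direct summand of some `Rⁿ` and `Ext¹(C, R) = 0`, also
`Ext¹(C, P) = 0`, so the first sequence splits and `E ≅ C × P`. To use the vanishing of
`Ext¹(C, P)` we compute it with a projective resolution `Q` of `C`: every `1`-cocycle `Q₁ → P` is
a coboundary, and this is what produces a section of `E → C`.
-/

namespace LinearMap

variable {S M N P : Type*} [Ring S] [AddCommGroup M] [AddCommGroup N] [AddCommGroup P]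
  [Module S M] [Module S N] [Module S P]

theorem exists_comp_eq_of_range_le {f : N →ₗ[S] P} (hf : Function.Injective f)
    {h : M →ₗ[S] P} (hle : range h ≤ range f) : ∃ ψ : M →ₗ[S] N, f ∘ₗ ψ = h :=
  ⟨(LinearEquiv.ofInjective f hf).symm ∘ₗ h.codRestrict _ fun x => hle ⟨x, rfl⟩, by
    ext x
    simp⟩

theorem exists_comp_eq_of_ker_le {ρ : M →ₗ[S] N} (hρ : Function.Surjective ρ)
    {σ : M →ₗ[S] P} (hle : ker ρ ≤ ker σ) : ∃ t : N →ₗ[S] P, t ∘ₗ ρ = σ :=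
  ⟨(ker ρ).liftQ σ hle ∘ₗ (ρ.quotKerEquivOfSurjective hρ).symm, by
    ext x
    simp⟩

section Pushout

variable {A B : Type*} [AddCommGroup A] [AddCommGroup B] [Module S A] [Module S B]
  (f : A →ₗ[S] B) (a : A →ₗ[S] P)

abbrev Pushout : Type _ := (B × P) ⧸ range (f.prod (-a))

namespace Pushout

def inl : B →ₗ[S] Pushout f a := (range (f.prod (-a))).mkQ ∘ₗ LinearMap.inl S B P

def inr : P →ₗ[S] Pushout f a := (range (f.prod (-a))).mkQ ∘ₗ LinearMap.inr S B P

variable {f a}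

def desc (u : B →ₗ[S] M) (v : P →ₗ[S] M) (h : u ∘ₗ f = v ∘ₗ a) : Pushout f a →ₗ[S] M :=
  (range (f.prod (-a))).liftQ (u.coprod v) <| by
    rintro _ ⟨x, rfl⟩
    simpa [← sub_eq_add_neg, sub_eq_zero] using LinearMap.congr_fun h x

@[simp]
theorem desc_mk (u : B →ₗ[S] M) (v : P →ₗ[S] M) (h : u ∘ₗ f = v ∘ₗ a) (y : B × P) :
    desc u v h (Submodule.Quotient.mk y) = u y.1 + v y.2 := rfl

@[simp]
theorem desc_inl (u : B →ₗ[S] M) (v : P →ₗ[S] M) (h : u ∘ₗ f = v ∘ₗ a) (y : B) :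
    desc u v h (inl f a y) = u y := by
  simp [inl]

@[simp]
theorem desc_inr (u : B →ₗ[S] M) (v : P →ₗ[S] M) (h : u ∘ₗ f = v ∘ₗ a) (p : P) :
    desc u v h (inr f a p) = v p := by
  simp [inr]

theorem inl_injective (ha : Function.Injective a) : Function.Injective (inl f a) := by
  refine (injective_iff_map_eq_zero _).mpr fun y hy => ?_
  obtain ⟨x, hx⟩ := (Submodule.Quotient.mk_eq_zero _).mp hy
  simp only [prod_apply, Function.prod, coe_inl, neg_apply, Prod.mk.injEq, neg_eq_zero] at hx
  rw [← hx.1, ha (hx.2.trans a.map_zero.symm), map_zero]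

theorem inr_injective (hf : Function.Injective f) : Function.Injective (inr f a) := by
  refine (injective_iff_map_eq_zero _).mpr fun p hp => ?_
  obtain ⟨x, hx⟩ := (Submodule.Quotient.mk_eq_zero _).mp hp
  simp only [prod_apply, Function.prod, coe_inr, neg_apply, Prod.mk.injEq] at hx
  rw [← hx.2, hf (hx.1.trans f.map_zero.symm), map_zero, neg_zero]

theorem exact_inl_desc {b : P →ₗ[S] M} (hab : Function.Exact a b) (h : 0 ∘ₗ f = b ∘ₗ a) :
    Function.Exact (inl f a) (desc 0 b h) := by
  refine exact_of_comp_of_mem_range (by ext; simp) fun e he => ?_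
  obtain ⟨⟨y, p⟩, rfl⟩ := Submodule.Quotient.mk_surjective _ e
  rw [desc_mk, zero_apply, zero_add] at he
  obtain ⟨x, rfl⟩ := (hab p).mp he
  exact ⟨y + f x, (Submodule.Quotient.eq _).mpr ⟨x, by simp⟩⟩

theorem exact_inr_desc {g : B →ₗ[S] M} (hfg : Function.Exact f g) (h : g ∘ₗ f = 0 ∘ₗ a) :
    Function.Exact (inr f a) (desc g 0 h) := by
  refine exact_of_comp_of_mem_range (by ext; simp) fun e he => ?_
  obtain ⟨⟨y, p⟩, rfl⟩ := Submodule.Quotient.mk_surjective _ e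
  rw [desc_mk, zero_apply, add_zero] at he
  obtain ⟨x, rfl⟩ := (hfg y).mp he
  exact ⟨p + a x, (Submodule.Quotient.eq _).mpr ⟨-x, by simp⟩⟩

theorem desc_surjective_of_left {u : B →ₗ[S] M} (hu : Function.Surjective u) (v : P →ₗ[S] M)
    (h : u ∘ₗ f = v ∘ₗ a) : Function.Surjective (desc u v h) := fun m =>
  let ⟨y, hy⟩ := hu m
  ⟨inl f a y, by rw [desc_inl, hy]⟩

theorem desc_surjective_of_right (u : B →ₗ[S] M) {v : P →ₗ[S] M} (hv : Function.Surjective v)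
    (h : u ∘ₗ f = v ∘ₗ a) : Function.Surjective (desc u v h) := fun m =>
  let ⟨p, hp⟩ := hv m
  ⟨inr f a p, by rw [desc_inr, hp]⟩

end Pushout

end Pushout

end LinearMap

namespace CategoryTheory.ProjectiveResolution

variable {R} {C : ModuleCat.{u} R} (Q : ProjectiveResolution C)

def OneCocyclesAreCoboundaries (N : Type*) [AddCommGroup N] [Module R N] : Prop :=
  ∀ u : Q.complex.X 1 →ₗ[R] N, u ∘ₗ (Q.complex.d 2 1).hom = 0 →
    ∃ v : Q.complex.X 0 →ₗ[R] N, v ∘ₗ (Q.complex.d 1 0).hom = u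

theorem oneCocyclesAreCoboundaries_of_subsingleton_ext (N : ModuleCat.{u} R)
    [Subsingleton (ExtMod R 1 C N)] : Q.OneCocyclesAreCoboundaries N := by
  intro u hu
  let K := Q.complex.linearYonedaObj R N
  have hK : K.ExactAt 1 := by
    rw [HomologicalComplex.exactAt_iff_isZero_homology]
    exact (ModuleCat.isZero_of_subsingleton _).of_iso (Q.isoExt 1 N).symm
  rw [K.exactAt_iff' 0 1 2 (by simp) (by simp), ShortComplex.moduleCat_exact_iff] at hK
  obtain ⟨v, hv⟩ := hK (ModuleCat.ofHom u) (by
    change Q.complex.d 2 1 ≫ ModuleCat.ofHom u = 0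
    ext x
    exact LinearMap.congr_fun hu x)
  exact ⟨v.hom, congrArg ModuleCat.Hom.hom hv⟩

variable {Q}

theorem OneCocyclesAreCoboundaries.pi {ι : Type*} {M : ι → Type*} [∀ i, AddCommGroup (M i)]
    [∀ i, Module R (M i)] (h : ∀ i, Q.OneCocyclesAreCoboundaries (M i)) :
    Q.OneCocyclesAreCoboundaries (∀ i, M i) := by
  intro u hu
  choose v hv using fun i => h i (LinearMap.proj i ∘ₗ u)
    (by rw [LinearMap.comp_assoc, hu, LinearMap.comp_zero])
  exact ⟨LinearMap.pi v, by ext x i; exact LinearMap.congr_fun (hv i) x⟩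

theorem OneCocyclesAreCoboundaries.of_retract {M N : Type*} [AddCommGroup M] [AddCommGroup N]
    [Module R M] [Module R N] (h : Q.OneCocyclesAreCoboundaries N) (s : M →ₗ[R] N)
    (r : N →ₗ[R] M) (hrs : r ∘ₗ s = .id) : Q.OneCocyclesAreCoboundaries M := by
  intro u hu
  obtain ⟨v, hv⟩ := h (s ∘ₗ u) (by rw [LinearMap.comp_assoc, hu, LinearMap.comp_zero])
  exact ⟨r ∘ₗ v, by rw [LinearMap.comp_assoc, hv, ← LinearMap.comp_assoc, hrs, LinearMap.id_comp]⟩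

theorem OneCocyclesAreCoboundaries.of_projective (h : Q.OneCocyclesAreCoboundaries R)
    (P : Type*) [AddCommGroup P] [Module R P] [Module.Finite R P] [Module.Projective R P] :
    Q.OneCocyclesAreCoboundaries P := by
  obtain ⟨n, r, s, -, -, hrs⟩ := Module.Finite.exists_comp_eq_id_of_projective R P
  exact (OneCocyclesAreCoboundaries.pi fun _ => h).of_retract s r hrs

theorem OneCocyclesAreCoboundaries.exists_section {N E : Type*} [AddCommGroup N] [AddCommGroup E]
    [Module R N] [Module R E] (h : Q.OneCocyclesAreCoboundaries N) {i : N →ₗ[R] E} {p : E →ₗ[R] C}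
    (hi : Function.Injective i) (hip : Function.Exact i p) (hp : Function.Surjective p) :
    ∃ s : C →ₗ[R] E, p ∘ₗ s = .id := by
  let d₁ := (Q.complex.d 1 0).hom
  let π : Q.complex.X 0 →ₗ[R] C := (Q.π.f 0).hom
  have hπ : Function.Surjective π := (ModuleCat.epi_iff_surjective _).mp inferInstance
  have : Module.Projective R (Q.complex.X 0) :=
    (IsProjective.iff_projective _).mpr (Q.projective 0)
  obtain ⟨φ, hφ⟩ := Module.projective_lifting_property p π hp
  obtain ⟨ψ, hψ⟩ : ∃ ψ : Q.complex.X 1 →ₗ[R] N, i ∘ₗ ψ = φ ∘ₗ d₁ := by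
    refine LinearMap.exists_comp_eq_of_range_le hi ?_
    rintro _ ⟨x, rfl⟩
    rw [← hip.linearMap_ker_eq, LinearMap.mem_ker, ← LinearMap.comp_apply, ← LinearMap.comp_assoc,
      hφ]
    exact LinearMap.congr_fun (congrArg ModuleCat.Hom.hom Q.complex_d_comp_π_f_zero) x
  have hd : d₁ ∘ₗ (Q.complex.d 2 1).hom = 0 := congrArg ModuleCat.Hom.hom (Q.complex.d_comp_d 2 1 0)
  obtain ⟨τ, hτ⟩ := h ψ <| by
    refine LinearMap.ext fun x => hi ?_
    rw [LinearMap.zero_apply, map_zero, ← LinearMap.comp_apply, ← LinearMap.comp_assoc, hψ,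
      LinearMap.comp_assoc, hd, LinearMap.comp_zero, LinearMap.zero_apply]
  -- Correcting the lift `φ` of `π` by `i ∘ τ` makes it vanish on `d₁ Q₁ = ker π`.
  have hker : LinearMap.ker π ≤ LinearMap.ker (φ - i ∘ₗ τ) := by
    rw [← show LinearMap.range d₁ = LinearMap.ker π from Q.exact₀.moduleCat_range_eq_ker]
    rintro _ ⟨x, rfl⟩
    rw [LinearMap.mem_ker, LinearMap.sub_apply, ← LinearMap.comp_apply φ, ← hψ, ← hτ]
    exact sub_self _
  obtain ⟨s, hs⟩ := LinearMap.exists_comp_eq_of_ker_le hπ hker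
  refine ⟨s, (LinearMap.cancel_right hπ).mp ?_⟩
  rw [LinearMap.comp_assoc, hs, LinearMap.comp_sub, ← LinearMap.comp_assoc, hφ,
    hip.linearMap_comp_eq_zero, LinearMap.zero_comp, sub_zero, LinearMap.id_comp]

end CategoryTheory.ProjectiveResolution

theorem exists_ses_pushout
    (A B C Y P : ModuleCat.{u} R)
    [Module.Finite R P] (hP : Module.Projective R P)
    (hC : Subsingleton (ExtMod R 1 C (ModuleCat.of R R)))
    (f : A →ₗ[R] B) (g : B →ₗ[R] C)
    (hf : Function.Injective f) (hfg : Function.Exact f g) (hg : Function.Surjective g)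
    (a : A →ₗ[R] P) (b : P →ₗ[R] Y)
    (ha : Function.Injective a) (hab : Function.Exact a b) (hb : Function.Surjective b) :
    ∃ (i : B →ₗ[R] C × P) (q : C × P →ₗ[R] Y),
      Function.Injective i ∧ Function.Exact i q ∧ Function.Surjective q := by
  have hExt : (ProjectiveResolution.of C).OneCocyclesAreCoboundaries P :=
    (ProjectiveResolution.oneCocyclesAreCoboundaries_of_subsingleton_ext _
      (ModuleCat.of R R)).of_projective P
  have hgf : g ∘ₗ f = 0 ∘ₗ a := by rw [hfg.linearMap_comp_eq_zero, LinearMap.zero_comp]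
  have hba : 0 ∘ₗ f = b ∘ₗ a := by rw [hab.linearMap_comp_eq_zero, LinearMap.zero_comp]
  have hinr := LinearMap.Pushout.inr_injective (a := a) hf
  have hexact := LinearMap.Pushout.exact_inr_desc hfg hgf
  obtain ⟨s, hs⟩ :=
    hExt.exists_section hinr hexact (LinearMap.Pushout.desc_surjective_of_left hg 0 hgf)
  let e := (hexact.splitSurjectiveEquiv hinr ⟨s, hs⟩).1.trans (LinearEquiv.prodComm R P C)
  exact ⟨e ∘ₗ LinearMap.Pushout.inl f a, LinearMap.Pushout.desc 0 b hba ∘ₗ e.symm,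
    e.injective.comp (LinearMap.Pushout.inl_injective ha),
    (e.conj_exact_iff_exact _ _).mpr (LinearMap.Pushout.exact_inl_desc hab hba),
    (LinearMap.Pushout.desc_surjective_of_right 0 hb hba).comp e.symm.surjective⟩

end
end

section
/- Let R be a commutative Noetherian local ring that is Artinian and injective as a module over itself (an Artinian Gorenstein ring). Then every finitely generated R-module is totally reflexive. -/
/-!
Since `R` is injective over itself, `Hom_R(-, R)` is exact. Applied to a projective
resolution this kills `Ext^i(-, R)` for `i > 0`. Applied twice to a finite presentation
`R^m → R^n → M → 0` it yields the right exact sequence `R^m** → R^n** → M** → 0`, and the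
five lemma transfers bijectivity of the evaluation map from the free modules to `M`.
-/

open CategoryTheory

universe u

noncomputable section

variable (R : Type u) [CommRing R]

/-- A finitely generated `R`-module `X` is totally reflexive (has G-dimension zero) if the
canonical evaluation map `X → Hom_R(Hom_R(X,R),R)` is an isomorphism and
`Ext^i_R(X,R) = 0` and `Ext^i_R(Hom_R(X,R),R) = 0` for all `i > 0`. -/
def IsTotallyReflexive (X : ModuleCat.{u} R) : Prop :=
  Module.Finite R X ∧
  Function.Bijective (Module.Dual.eval R X) ∧
  (∀ i : ℕ, 0 < i → Subsingleton (ExtMod R i X (ModuleCat.of R R))) ∧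
  (∀ i : ℕ, 0 < i →
    Subsingleton (ExtMod R i (ModuleCat.of R (Module.Dual R X)) (ModuleCat.of R R)))

variable {R}

universe v

namespace LinearMap

variable {M₁ M₂ M₃ : Type*} [AddCommGroup M₁] [AddCommGroup M₂] [AddCommGroup M₃]
  [Module R M₁] [Module R M₂] [Module R M₃]
  (N : Type v) [AddCommGroup N] [Module R N] [Small.{v} R] [Module.Injective R N]

theorem lcomp_surjective_of_injective {f : M₁ →ₗ[R] M₂} (hf : Function.Injective f) :
    Function.Surjective (lcomp R N f) := fun h ↦
  Module.Injective.extension_property R N M₁ M₂ f hf h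

theorem exact_lcomp_of_exact_of_injective {f : M₁ →ₗ[R] M₂} {g : M₂ →ₗ[R] M₃}
    (hfg : Function.Exact f g) : Function.Exact (lcomp R N g) (lcomp R N f) := by
  intro h
  refine ⟨fun hh ↦ ?_, ?_⟩
  · have hfg' : Function.Exact f g.rangeRestrict := fun y ↦ by
      simpa [Subtype.ext_iff] using hfg y
    obtain ⟨k, hk⟩ :=
      (exact_lcomp_of_exact_of_surjective N hfg' g.surjective_rangeRestrict h).1 hh
    obtain ⟨k', hk'⟩ := Module.Injective.extension_property R N _ _ (range g).subtype
      (range g).injective_subtype k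
    refine ⟨k', ?_⟩
    rw [lcomp_apply', ← hk, lcomp_apply', ← hk', comp_assoc]
    rfl
  · rintro ⟨k, rfl⟩
    rw [lcomp_apply', lcomp_apply', comp_assoc, hfg.linearMap_comp_eq_zero, comp_zero]

end LinearMap

theorem Module.bijective_dual_eval_of_injective [Module.Injective R R]
    (M : Type*) [AddCommGroup M] [Module R M] [Module.FinitePresentation R M] :
    Function.Bijective (Dual.eval R M) := by
  obtain ⟨n, m, π, d, hπ, hd⟩ := Module.FinitePresentation.exists_fin' R M
  have hdual : Function.Exact π.dualMap d.dualMap :=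
    LinearMap.exact_lcomp_of_exact_of_surjective R hd hπ
  have hbidual : Function.Exact d.dualMap.dualMap π.dualMap.dualMap :=
    LinearMap.exact_lcomp_of_exact_of_injective R hdual
  have hsurj : Function.Surjective π.dualMap.dualMap :=
    LinearMap.lcomp_surjective_of_injective R (LinearMap.dualMap_injective_of_surjective hπ)
  exact LinearMap.bijective_of_surjective_of_bijective_of_right_exact d π
    d.dualMap.dualMap π.dualMap.dualMap (Dual.eval R _) (Dual.eval R _) (Dual.eval R M)
    (Dual.eval_naturality d) (Dual.eval_naturality π) hd hbidual
    (bijective_dual_eval R _).2 (bijective_dual_eval R _) hπ hsurj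

section

variable {C : Type*} [Category* C] [Abelian C] [Linear R C] [EnoughProjectives C]

lemma isZero_Ext_succ_of_injective (X Y : C) [Injective Y] (n : ℕ) :
    Limits.IsZero (((Ext R C (n + 1)).obj (Opposite.op X)).obj Y) := by
  let P := ProjectiveResolution.of X
  refine Limits.IsZero.of_iso ?_ (P.isoExt (n + 1) Y)
  rw [← HomologicalComplex.exactAt_iff_isZero_homology,
    HomologicalComplex.exactAt_iff' _ n (n + 1) (n + 2) (by simp) (by simp),
    ShortComplex.moduleCat_exact_iff]
  have hP := (HomologicalComplex.exactAt_iff' _ (n + 2) (n + 1) n (by simp) (by simp)).1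
    (P.complex_exactAt_succ n)
  intro x hx
  exact ⟨hP.descToInjective x hx, hP.comp_descToInjective x hx⟩

end

lemma subsingleton_extMod_of_injective (hinj : Module.Injective R R) (X : ModuleCat.{u} R)
    {i : ℕ} (hi : 0 < i) : Subsingleton (ExtMod R i X (ModuleCat.of R R)) := by
  have := Module.injective_object_of_injective_module (R := R) (M := R)
  obtain ⟨n, rfl⟩ := Nat.exists_eq_add_one_of_ne_zero hi.ne'
  exact ModuleCat.subsingleton_of_isZero (isZero_Ext_succ_of_injective X _ n)

variable (R)

theorem isTotallyReflexive_of_artinian_gorenstein [IsNoetherianRing R]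
    (hinj : Module.Injective R R)
    (X : ModuleCat.{u} R) (hX : Module.Finite R X) :
    IsTotallyReflexive R X :=
  have := Module.finitePresentation_of_finite R X
  ⟨hX, Module.bijective_dual_eval_of_injective X,
    fun _ ↦ subsingleton_extMod_of_injective hinj X,
    fun _ ↦ subsingleton_extMod_of_injective hinj _⟩

end
end
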